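/- Greedy achieves a (1 − 1/e) approximation for cardinality-constrained monotone submodular maximization: if F is a monotone submodular set function on a finite ground set with F(∅) = 0, and G_r is the set built by r steps of greedy selection (each step adding an element with maximal marginal gain), then F(G_r) ≥ (1 − (1 − 1/r)^r) · max_{|S| ≤ r} F(S) ≥ (1 − 1/e) · max_{|S| ≤ r} F(S). -/

import Mathlib

open Finset

/-!
After `t` greedy steps, submodularity bounds the gap `F S - F (G t)` to any set `S` of at most `r`
elements by the sum of the `|S| ≤ r` marginal gains of the elements of `S` over `G t`, each of
which is at most the greedy gain. So every step closes at least a `1/r` fraction of the gap, the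
gap shrinks geometrically by the factor `1 - 1/r`, and `(1 - 1/r)^r ≤ 1/e`.
-/

variable {α : Type*} [DecidableEq α]

def Submodular (F : Finset α → ℝ) : Prop :=
  ∀ S T : Finset α, ∀ x : α, S ⊆ T → F (insert x T) - F T ≤ F (insert x S) - F S

def IsGreedyRun (F : Finset α → ℝ) (r : ℕ) (G : ℕ → Finset α) : Prop :=
  ∀ t < r, ∃ x : α, G (t + 1) = insert x (G t) ∧
    ∀ y : α, F (insert y (G t)) ≤ F (insert x (G t))

namespace Submodular

variable {F : Finset α → ℝ}

theorem sub_le_sum_marginal (hF : Submodular F) (T A : Finset α) :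
    F (T ∪ A) - F T ≤ ∑ x ∈ A, (F (insert x T) - F T) := by
  induction A using Finset.induction_on with
  | empty => simp
  | insert a A ha ih =>
    rw [union_insert, sum_insert ha]
    linarith [hF T (T ∪ A) a subset_union_left]

theorem sub_le_card_mul_greedy_gain (hmono : Monotone F) (hF : Submodular F)
    (S A : Finset α) {x : α} (hx : ∀ y, F (insert y A) ≤ F (insert x A)) :
    F S - F A ≤ #S * (F (insert x A) - F A) :=
  calc F S - F A ≤ F (A ∪ S) - F A := by linarith [hmono (subset_union_right : S ⊆ A ∪ S)]
    _ ≤ ∑ y ∈ S, (F (insert y A) - F A) := hF.sub_le_sum_marginal A S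
    _ ≤ ∑ _y ∈ S, (F (insert x A) - F A) := sum_le_sum fun y _ ↦ by linarith [hx y]
    _ = #S * (F (insert x A) - F A) := by rw [sum_const, nsmul_eq_mul]

theorem sub_greedy_step_le (hmono : Monotone F) (hF : Submodular F)
    {S A : Finset α} {r : ℕ} (hr : 0 < r) (hS : #S ≤ r) {x : α}
    (hx : ∀ y, F (insert y A) ≤ F (insert x A)) :
    F S - F (insert x A) ≤ (1 - 1 / (r : ℝ)) * (F S - F A) := by
  have hgain : 0 ≤ F (insert x A) - F A := sub_nonneg.2 (hmono (subset_insert x A))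
  have hr' : (0 : ℝ) < r := Nat.cast_pos.2 hr
  have hgap : F S - F A ≤ r * (F (insert x A) - F A) :=
    (hF.sub_le_card_mul_greedy_gain hmono S A hx).trans
      (mul_le_mul_of_nonneg_right (Nat.cast_le.2 hS) hgain)
  have hfrac : (F S - F A) / r ≤ F (insert x A) - F A := by
    rwa [div_le_iff₀ hr', mul_comm]
  have hexpand : (1 - 1 / (r : ℝ)) * (F S - F A) = (F S - F A) - (F S - F A) / r := by ring
  linarith

theorem sub_greedy_le_pow_mul (hmono : Monotone F) (hF : Submodular F)
    {r : ℕ} {G : ℕ → Finset α} (hG : IsGreedyRun F r G) {S : Finset α} (hS : #S ≤ r) :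
    F S - F (G r) ≤ (1 - 1 / (r : ℝ)) ^ r * (F S - F (G 0)) := by
  refine le_geom (u := fun t ↦ F S - F (G t)) (Nat.one_sub_one_div_cast_nonneg r) r
    fun t ht ↦ ?_
  obtain ⟨x, hGt, hx⟩ := hG t ht
  rw [hGt]
  exact hF.sub_greedy_step_le hmono (t.zero_le.trans_lt ht) hS hx

end Submodular

theorem greedy_submodular_approximation_general
    (n : ℕ) (F : Finset (Fin n) → ℝ)
    (hmono : ∀ S T : Finset (Fin n), S ⊆ T → F S ≤ F T)
    (hsub : ∀ S T : Finset (Fin n), ∀ x : Fin n, S ⊆ T →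
      F (insert x T) - F T ≤ F (insert x S) - F S)
    (hempty : F ∅ = 0)
    (r : ℕ)
    (G : ℕ → Finset (Fin n)) (hG0 : G 0 = ∅)
    (hgreedy : ∀ t < r, ∃ x : Fin n, G (t + 1) = insert x (G t) ∧
      ∀ y : Fin n, F (insert y (G t)) ≤ F (insert x (G t))) :
    ∀ S : Finset (Fin n), S.card ≤ r →
      (1 - (1 - 1 / (r : ℝ)) ^ r) * F S ≤ F (G r) ∧
      (1 - 1 / Real.exp 1) * F S ≤ F (G r) := by
  intro S hS
  have hgap := Submodular.sub_greedy_le_pow_mul (fun S T ↦ hmono S T) hsub hgreedy hS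
  rw [hG0, hempty, sub_zero] at hgap
  have hratio : (1 - (1 - 1 / (r : ℝ)) ^ r) * F S ≤ F (G r) := by linarith
  refine ⟨hratio, ?_⟩
  rcases Nat.eq_zero_or_pos r with rfl | hr
  · simp [card_eq_zero.1 (Nat.le_zero.1 hS), hempty, hG0]
  have hpow : (1 - 1 / (r : ℝ)) ^ r ≤ 1 / Real.exp 1 := by
    simpa [Real.exp_neg] using
      Real.one_sub_div_pow_le_exp_neg (n := r) (t := 1) (by exact_mod_cast hr)
  have hFS : 0 ≤ F S := hempty ▸ hmono ∅ S (empty_subset S)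
  exact (mul_le_mul_of_nonneg_right (by linarith) hFS).trans hratio

/-- Greedy achieves a `1 - (1 - 1/r)^r ≥ 1 - 1/e` approximation for
cardinality-constrained monotone submodular maximization. -/
theorem greedy_submodular_approximation
    (n : ℕ) (F : Finset (Fin n) → ℝ)
    (hmono : ∀ S T : Finset (Fin n), S ⊆ T → F S ≤ F T)
    (hsub : ∀ S T : Finset (Fin n), ∀ x : Fin n, S ⊆ T →
      F (insert x T) - F T ≤ F (insert x S) - F S)
    (hempty : F ∅ = 0)
    (r : ℕ) (hr : 1 ≤ r)
    (G : ℕ → Finset (Fin n)) (hG0 : G 0 = ∅)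
    (hgreedy : ∀ t < r, ∃ x : Fin n, G (t + 1) = insert x (G t) ∧
      ∀ y : Fin n, F (insert y (G t)) ≤ F (insert x (G t))) :
    ∀ S : Finset (Fin n), S.card ≤ r →
      (1 - (1 - 1 / (r : ℝ)) ^ r) * F S ≤ F (G r) ∧
      (1 - 1 / Real.exp 1) * F S ≤ F (G r) :=
  greedy_submodular_approximation_general n F hmono hsub hempty r G hG0 hgreedy
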